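/- arXiv:2603.26301 — 4 statements merged into one kernel-verified Lean document; each statement's English description precedes it below -/
import Mathlib

section
/- Let M=(I,V,E) be an iMAG and D⊆I∪V. Then a directed edge a→b with a,b∈V is visible in M if and only if it is visible in the soft-manipulated graph M_{do(I_D)}. -/
noncomputable section
open Classical

/-- Edge-endpoint marks: tail `−`, arrowhead `>`, or circle `∘`. -/
inductive Mark : Type
  | tail
  | arrow
  | circle
  deriving DecidableEq

/-- A mixed graph with input nodes over a node type `N`, as raw data.
`mark a b` is the mark at `a` on the (unique) edge between `a` and `b`,
or `none` if there is no edge between `a` and `b`. -/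
structure MixedGraph (N : Type) where
  inputs : Set N
  outputs : Set N
  mark : N → N → Option Mark

namespace MixedGraph

variable {N N' : Type}

/-- All nodes of the graph. -/
def nodes (G : MixedGraph N) : Set N := G.inputs ∪ G.outputs

/-- `a` and `b` are adjacent (joined by an edge). -/
def adj (G : MixedGraph N) (a b : N) : Prop := (G.mark a b).isSome

/-- Directed edge `a → b`: tail at `a`, arrowhead at `b`. -/
def dir (G : MixedGraph N) (a b : N) : Prop :=
  G.mark a b = some Mark.tail ∧ G.mark b a = some Mark.arrow

/-- Bidirected edge `a ↔ b`. -/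
def bidir (G : MixedGraph N) (a b : N) : Prop :=
  G.mark a b = some Mark.arrow ∧ G.mark b a = some Mark.arrow

/-- Undirected edge `a − b`. -/
def undir (G : MixedGraph N) (a b : N) : Prop :=
  G.mark a b = some Mark.tail ∧ G.mark b a = some Mark.tail

/-- Edge `a ∘→ b`: circle at `a`, arrowhead at `b`. -/
def circArrow (G : MixedGraph N) (a b : N) : Prop :=
  G.mark a b = some Mark.circle ∧ G.mark b a = some Mark.arrow

/-- Edge `a ∘−∘ b`: circles at both ends. -/
def circCirc (G : MixedGraph N) (a b : N) : Prop :=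
  G.mark a b = some Mark.circle ∧ G.mark b a = some Mark.circle

/-- Edge `a ∘− b`: circle at `a`, tail at `b`. -/
def circTail (G : MixedGraph N) (a b : N) : Prop :=
  G.mark a b = some Mark.circle ∧ G.mark b a = some Mark.tail

/-- Edge `a −∘ b`: tail at `a`, circle at `b`. -/
def tailCirc (G : MixedGraph N) (a b : N) : Prop :=
  G.mark a b = some Mark.tail ∧ G.mark b a = some Mark.circle

/-- Some edge of `G` carries an arrowhead at `a`. -/
def arrowAt (G : MixedGraph N) (a : N) : Prop :=
  ∃ b, G.mark a b = some Mark.arrow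

/-- `a` is an ancestor of `b`: `a = b` or a directed path `a → ⋯ → b` exists. -/
def anc (G : MixedGraph N) : N → N → Prop := Relation.ReflTransGen G.dir

/-- The ancestors of a set `S` of nodes. -/
def ancSet (G : MixedGraph N) (S : Set N) : Set N := {a | ∃ s ∈ S, G.anc a s}

/-- Potentially directed edge from `a` towards `b`: an edge with no arrowhead at its
earlier endpoint `a` and no tail at its later endpoint `b`. -/
def potDir (G : MixedGraph N) (a b : N) : Prop :=
  G.adj a b ∧ G.mark a b ≠ some Mark.arrow ∧ G.mark b a ≠ some Mark.tail

/-- `a` is a possible ancestor of `b`: `a = b` or a potentially directed path runs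
from `a` to `b`. -/
def poAn (G : MixedGraph N) : N → N → Prop := Relation.ReflTransGen G.potDir

/-- The possible ancestors of a set `S` of nodes. -/
def poAnSet (G : MixedGraph N) (S : Set N) : Set N := {a | ∃ s ∈ S, G.poAn a s}

/-- Well-formedness of a mixed graph with input nodes: inputs and outputs are disjoint
finite sets, edges are symmetric and irreflexive and join nodes of the graph. -/
def WF (G : MixedGraph N) : Prop :=
  Disjoint G.inputs G.outputs ∧ G.inputs.Finite ∧ G.outputs.Finite ∧
  (∀ a b, (G.mark a b).isSome → (G.mark b a).isSome) ∧
  (∀ a, G.mark a a = none) ∧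
  (∀ a b, (G.mark a b).isSome → a ∈ G.nodes ∧ b ∈ G.nodes)

/-- The induced subgraph of `G` over the node set `A`. -/
def induce (G : MixedGraph N) (A : Set N) : MixedGraph N where
  inputs := G.inputs ∩ A
  outputs := G.outputs ∩ A
  mark := fun a b => if a ∈ A ∧ b ∈ A then G.mark a b else none

/-- Transport a mixed graph over `N` to one over `N ⊕ N'` along `Sum.inl`. -/
def sumInl (G : MixedGraph N) : MixedGraph (N ⊕ N') where
  inputs := Sum.inl '' G.inputs
  outputs := Sum.inl '' G.outputs
  mark := fun x y =>
    match x, y with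
    | Sum.inl a, Sum.inl b => G.mark a b
    | _, _ => none

/-- `G` is a subgraph of `H`: its nodes and marked edges are among those of `H`. -/
def Subgraph (G H : MixedGraph N) : Prop :=
  G.inputs ⊆ H.inputs ∧ G.outputs ⊆ H.outputs ∧
  ∀ a b m, G.mark a b = some m → H.mark a b = some m

end MixedGraph

/-- A walk in `G` with `len` edges, visiting the nodes `f 0, …, f len`
(consecutive nodes are adjacent). -/
structure GWalk {N : Type} (G : MixedGraph N) where
  len : ℕ
  f : ℕ → N
  hadj : ∀ i < len, G.adj (f i) (f (i + 1))

namespace GWalk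

variable {N : Type} {G : MixedGraph N}

/-- The first node of the walk. -/
def first (w : GWalk G) : N := w.f 0

/-- The last node of the walk. -/
def last (w : GWalk G) : N := w.f w.len

/-- The walk is a path: no repeated nodes. -/
def IsPath (w : GWalk G) : Prop :=
  ∀ i ≤ w.len, ∀ j ≤ w.len, w.f i = w.f j → i = j

/-- The (interior) node at position `i` is a collider on the walk: both incident
edges carry arrowheads at it. -/
def ColliderAt (w : GWalk G) (i : ℕ) : Prop :=
  G.mark (w.f i) (w.f (i - 1)) = some Mark.arrow ∧
  G.mark (w.f i) (w.f (i + 1)) = some Mark.arrow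

end GWalk

namespace MixedGraph

variable {N : Type}

/-- `w` is an `(L,S)`-inducing walk: every non-endnode is in `L` or a collider, and
every collider lies in `Anc({first, last} ∪ S)`. -/
def InducingWalk (G : MixedGraph N) (L S : Set N) (w : GWalk G) : Prop :=
  (∀ i, 0 < i → i < w.len → w.f i ∈ L ∨ w.ColliderAt i) ∧
  (∀ i, 0 < i → i < w.len → w.ColliderAt i →
    w.f i ∈ G.ancSet ({w.first, w.last} ∪ S))

/-- There is an `(L,S)`-inducing walk from `a` to `b` in `G`. -/
def InducingWalkBtw (G : MixedGraph N) (L S : Set N) (a b : N) : Prop :=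
  ∃ w : GWalk G, w.first = a ∧ w.last = b ∧ G.InducingWalk L S w

/-- There is an `(L,S)`-inducing path from `a` to `b` in `G`. -/
def InducingPathBtw (G : MixedGraph N) (L S : Set N) (a b : N) : Prop :=
  ∃ w : GWalk G, w.IsPath ∧ w.first = a ∧ w.last = b ∧ G.InducingWalk L S w

/-- `G` is an iADMG: all edges directed or bidirected, no directed cycles, no
arrowheads at input nodes, and no edges between two input nodes. -/
def IsIADMG (G : MixedGraph N) : Prop :=
  G.WF ∧
  (∀ a b, G.adj a b → G.dir a b ∨ G.dir b a ∨ G.bidir a b) ∧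
  (∀ a b, G.dir a b → ¬ G.anc b a) ∧
  (∀ a ∈ G.inputs, ∀ b, G.mark a b ≠ some Mark.arrow) ∧
  (∀ a ∈ G.inputs, ∀ b ∈ G.inputs, ¬ G.adj a b)

/-- `G` is an iPAG. -/
def IsIPAG (G : MixedGraph N) : Prop :=
  G.WF ∧
  (∀ a ∈ G.inputs, ∀ b, G.mark a b ≠ some Mark.arrow) ∧
  (∀ a ∈ G.inputs, ∀ b ∈ G.inputs, ¬ G.adj a b) ∧
  (∀ a b, G.dir a b → ¬ G.anc b a) ∧
  (∀ a b, G.anc a b → ¬ G.bidir b a) ∧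
  (∀ a b c, G.mark b a = some Mark.arrow → ¬ G.undir b c) ∧
  (∀ a b, a ≠ b → a ∈ G.nodes → b ∈ G.nodes → ¬ G.adj a b →
    ¬ G.InducingPathBtw ∅ ∅ a b)

/-- `G` is an iMAG: an iPAG with no circle marks. -/
def IsIMAG (G : MixedGraph N) : Prop :=
  G.IsIPAG ∧ ∀ a b, G.mark a b ≠ some Mark.circle

/-- The visibility condition for a directed edge `a → b` of `G`: either `a` is an
input node, or some node `c` not adjacent to `b` satisfies `c *→ a`, or there is a
path `c *→ v₁ ↔ ⋯ ↔ v_{n−1} ↔ a` (`n ≥ 2`) with every `vᵢ` a parent of `b`. -/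
def VisibleCond (G : MixedGraph N) (a b : N) : Prop :=
  a ∈ G.inputs ∨
  ∃ c, c ≠ b ∧ ¬ G.adj c b ∧
    (G.mark a c = some Mark.arrow ∨
      ∃ w : GWalk G, w.IsPath ∧ 2 ≤ w.len ∧ w.first = c ∧ w.last = a ∧
        G.mark (w.f 1) (w.f 0) = some Mark.arrow ∧
        (∀ i, 1 ≤ i → i < w.len → G.bidir (w.f i) (w.f (i + 1))) ∧
        (∀ i, 1 ≤ i → i < w.len → G.dir (w.f i) b))

/-- `a → b` is a visible directed edge of `G`. -/
def VisibleDir (G : MixedGraph N) (a b : N) : Prop :=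
  G.dir a b ∧ G.VisibleCond a b

/-- `a` and `b` are in the same bucket of `G`: some path between them carries no
arrowhead mark on any of its edges. -/
def SameBucket (G : MixedGraph N) (a b : N) : Prop :=
  ∃ w : GWalk G, w.IsPath ∧ w.first = a ∧ w.last = b ∧
    ∀ i < w.len, G.mark (w.f i) (w.f (i + 1)) ≠ some Mark.arrow ∧
      G.mark (w.f (i + 1)) (w.f i) ≠ some Mark.arrow

end MixedGraph

/-- An isADMG: an iADMG together with its set `sel` of latent selection nodes.
The observed output nodes are `graph.outputs \ sel`. -/
structure SADMG (N : Type) where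
  graph : MixedGraph N
  sel : Set N

namespace SADMG

/-- Well-formedness of an isADMG. -/
def WF {N : Type} (A : SADMG N) : Prop :=
  A.graph.IsIADMG ∧ A.sel ⊆ A.graph.outputs

/-- The observed output nodes `O`. -/
def obs {N : Type} (A : SADMG N) : Set N := A.graph.outputs \ A.sel

end SADMG

/-- An ilsADMG: an iADMG together with its sets of latent output nodes and of
latent selection nodes.  The observed output nodes are the remaining outputs. -/
structure LSADMG (N : Type) where
  graph : MixedGraph N
  latent : Set N
  sel : Set N

namespace LSADMG

/-- Well-formedness of an ilsADMG. -/
def WF {N : Type} (A : LSADMG N) : Prop :=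
  A.graph.IsIADMG ∧ A.latent ⊆ A.graph.outputs ∧ A.sel ⊆ A.graph.outputs ∧
  Disjoint A.latent A.sel

/-- The observed output nodes `O`. -/
def obs {N : Type} (A : LSADMG N) : Set N := A.graph.outputs \ (A.latent ∪ A.sel)

end LSADMG

/-- An iPAG/iMAG `P` represents the isADMG `A`: nodes match; adjacency in `P`
corresponds exactly to `S`-inducing paths in `A` (with no edges inside the inputs);
arrowheads at `a` imply `a ∉ Anc_A({b} ∪ S)`; tails at `a` imply `a ∈ Anc_A({b} ∪ S)`. -/
def RepresentsS {N : Type} (P : MixedGraph N) (A : SADMG N) : Prop :=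
  P.inputs = A.graph.inputs ∧
  P.outputs = A.obs ∧
  (∀ a b, a ≠ b → a ∈ P.nodes → b ∈ P.nodes →
    (P.adj a b ↔
      (¬(a ∈ P.inputs ∧ b ∈ P.inputs) ∧ A.graph.InducingPathBtw ∅ A.sel a b))) ∧
  (∀ a b, P.mark a b = some Mark.arrow → a ∉ A.graph.ancSet ({b} ∪ A.sel)) ∧
  (∀ a b, P.mark a b = some Mark.tail → a ∈ A.graph.ancSet ({b} ∪ A.sel))

/-- An iPAG/iMAG `P` `(L,S)`-represents the ilsADMG `A`. -/
def RepresentsLS {N : Type} (P : MixedGraph N) (A : LSADMG N) : Prop :=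
  P.inputs = A.graph.inputs ∧
  P.outputs = A.obs ∧
  (∀ a b, a ≠ b → a ∈ P.nodes → b ∈ P.nodes →
    (P.adj a b ↔
      (¬(a ∈ P.inputs ∧ b ∈ P.inputs) ∧ A.graph.InducingPathBtw A.latent A.sel a b))) ∧
  (∀ a b, P.mark a b = some Mark.arrow → a ∉ A.graph.ancSet ({b} ∪ A.sel)) ∧
  (∀ a b, P.mark a b = some Mark.tail → a ∈ A.graph.ancSet ({b} ∪ A.sel))

/-- The explicit candidate for `MAG(A)` of an ilsADMG `A`: input nodes `I`, output
nodes `O`; distinct `a,b ∈ I ∪ O` adjacent iff `{a,b} ⊄ I` and there is an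
`(L,S)`-inducing path between them in `A`; the mark at `a` on each edge is a tail
if `a ∈ Anc_A({b} ∪ S)` and an arrowhead otherwise. -/
def magOfLS {N : Type} (A : LSADMG N) : MixedGraph N where
  inputs := A.graph.inputs
  outputs := A.obs
  mark := fun a b =>
    if a ≠ b ∧ a ∈ A.graph.inputs ∪ A.obs ∧ b ∈ A.graph.inputs ∪ A.obs ∧
        ¬(a ∈ A.graph.inputs ∧ b ∈ A.graph.inputs) ∧
        A.graph.InducingPathBtw A.latent A.sel a b then
      (if a ∈ A.graph.ancSet ({b} ∪ A.sel) then some Mark.tail else some Mark.arrow)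
    else none

/-- A walk is `C`-open (in a graph without circle marks): its endnodes are not in
`C`, no non-collider on it is in `C`, and every collider on it is in `Anc(C)`. -/
def COpen {N : Type} (H : MixedGraph N) (C : Set N) (w : GWalk H) : Prop :=
  w.first ∉ C ∧ w.last ∉ C ∧
  ∀ i, 0 < i → i < w.len →
    (¬ w.ColliderAt i → w.f i ∉ C) ∧ (w.ColliderAt i → w.f i ∈ H.ancSet C)

/-- `A` is id-separated from `B` given `C` in `H` (graphs without circle marks):
every path/walk from a node of `A` to a node of `B ∪ inputs` is not `C`-open. -/
def IdSepSimple {N : Type} (H : MixedGraph N) (A B C : Set N) : Prop :=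
  ∀ w : GWalk H, w.first ∈ A → w.last ∈ B ∪ H.inputs → ¬ COpen H C w

/-- A walk in a manipulated graph `H` (with set `DI` of regime input nodes) is
`C`-id-open. -/
def IdOpen {N : Type} (H : MixedGraph N) (DI C : Set N) (w : GWalk H) : Prop :=
  w.first ∉ C ∧ w.last ∉ C ∧
  ∀ i, 0 < i → i < w.len →
    (w.f i ∉ C ∧ (H.mark (w.f i) (w.f (i - 1)) = some Mark.tail ∨
        H.mark (w.f i) (w.f (i + 1)) = some Mark.tail)) ∨
    (w.f i ∉ C ∧ H.mark (w.f i) (w.f (i - 1)) = some Mark.circle ∧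
        H.mark (w.f i) (w.f (i + 1)) = some Mark.circle ∧
        ¬ H.adj (w.f (i - 1)) (w.f (i + 1))) ∨
    (w.ColliderAt i ∧ w.f (i - 1) ∉ DI ∧ w.f i ∉ DI ∧ w.f (i + 1) ∉ DI ∧
        w.f i ∈ H.ancSet C) ∨
    (w.ColliderAt i ∧ ¬(w.f (i - 1) ∉ DI ∧ w.f i ∉ DI ∧ w.f (i + 1) ∉ DI) ∧
        w.f i ∈ H.poAnSet (C ∩ H.outputs)) ∨
    (w.f (i - 1) ∈ DI ∧ H.mark (w.f i) (w.f (i - 1)) = some Mark.circle ∧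
        H.mark (w.f i) (w.f (i + 1)) = some Mark.arrow ∧
        w.f i ∈ H.poAnSet (C ∩ H.outputs)) ∨
    (w.f (i + 1) ∈ DI ∧ H.mark (w.f i) (w.f (i - 1)) = some Mark.arrow ∧
        H.mark (w.f i) (w.f (i + 1)) = some Mark.circle ∧
        w.f i ∈ H.poAnSet (C ∩ H.outputs))

/-- `A` is id-separated from `B` given `C` in the manipulated graph `H`, whose set
of regime input nodes is `DI`: every path/walk from a node of `A` to a node of
`B ∪ inputs` is not `C`-id-open. -/
def IdSep {N : Type} (H : MixedGraph N) (DI A B C : Set N) : Prop :=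
  ∀ w : GWalk H, w.first ∈ A → w.last ∈ B ∪ H.inputs → ¬ IdOpen H DI C w

/-- Hard manipulation `do(T)` of an isADMG-type graph: reclassify the nodes of `T`
as input nodes and delete every edge with an arrowhead at a node of `T`. -/
def admgHardManip {N : Type} (G : MixedGraph N) (T : Set N) : MixedGraph N where
  inputs := G.inputs ∪ (T ∩ G.outputs)
  outputs := G.outputs \ T
  mark := fun x y =>
    if (x ∈ T ∧ G.mark x y = some Mark.arrow) ∨
        (y ∈ T ∧ G.mark y x = some Mark.arrow) then none
    else G.mark x y

/-- Soft manipulation `do(I_D)` of an isADMG-type graph: add a fresh input node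
`I_d = Sum.inr d` and the directed edge `I_d → d` for each `d ∈ D`. -/
def admgSoftManip {N : Type} (G : MixedGraph N) (D : Set N) : MixedGraph (N ⊕ N) where
  inputs := Sum.inl '' G.inputs ∪ Sum.inr '' D
  outputs := Sum.inl '' G.outputs
  mark := fun x y =>
    match x, y with
    | Sum.inl a, Sum.inl b => G.mark a b
    | Sum.inr d, Sum.inl a => if d ∈ D ∧ a = d then some Mark.tail else none
    | Sum.inl a, Sum.inr d => if d ∈ D ∧ a = d then some Mark.arrow else none
    | Sum.inr _, Sum.inr _ => none

/-- Soft manipulation of an isADMG. -/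
def SADMG.softManip {N : Type} (A : SADMG N) (D : Set N) : SADMG (N ⊕ N) where
  graph := admgSoftManip A.graph D
  sel := Sum.inl '' A.sel

/-- Hard manipulation `do(T)` of an iMAG-type graph: input nodes `I ∪ (T ∩ V)`,
output nodes `V \ T`; delete all edges with an arrowhead at a node of `T \ I` and
all edges between two nodes of `T ∪ I`. -/
def magHardManip {N : Type} (G : MixedGraph N) (T : Set N) : MixedGraph N where
  inputs := G.inputs ∪ (T ∩ G.outputs)
  outputs := G.outputs \ T
  mark := fun x y =>
    if (x ∈ T ∧ x ∉ G.inputs ∧ G.mark x y = some Mark.arrow) ∨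
        (y ∈ T ∧ y ∉ G.inputs ∧ G.mark y x = some Mark.arrow) ∨
        ((x ∈ T ∨ x ∈ G.inputs) ∧ (y ∈ T ∨ y ∈ G.inputs)) then none
    else G.mark x y

/-- The mark at node `y` on the new edge between the regime node `I_a = Sum.inr a`
and `y` in the soft manipulation of an iMAG-type graph `G` over `N ⊕ N`
(`none` if there is no such edge): `I_a → a` if some edge of `G` has an arrowhead
at `a`; `I_a − a` if some undirected edge is at `a`; `I_a −∘ a` otherwise;
`I_a → b` for every output `b` with `a → b` invisible; `I_a − b` for every output
`b` with `a − b` in `G`. -/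
def magSoftTarget {N : Type} (G : MixedGraph (N ⊕ N)) (a : N) (y : N ⊕ N) : Option Mark :=
  if y = Sum.inl a then
    (if G.arrowAt (Sum.inl a) then some Mark.arrow
     else if ∃ c, G.undir (Sum.inl a) c then some Mark.tail
     else some Mark.circle)
  else if y ∈ G.outputs ∧ G.dir (Sum.inl a) y ∧ ¬ G.VisibleCond (Sum.inl a) y then
    some Mark.arrow
  else if y ∈ G.outputs ∧ G.undir (Sum.inl a) y then some Mark.tail
  else none

/-- The mark at node `y` on the new edge between the regime node `I_a = Sum.inr a`
and `y` in the soft manipulation of an iPAG-type graph `G` over `N ⊕ N`. -/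
def pagSoftTarget {N : Type} (G : MixedGraph (N ⊕ N)) (a : N) (y : N ⊕ N) : Option Mark :=
  if y = Sum.inl a then
    (if G.arrowAt (Sum.inl a) then some Mark.arrow
     else if ∃ c, G.undir (Sum.inl a) c then some Mark.tail
     else some Mark.circle)
  else if y ∈ G.outputs ∧ ((G.dir (Sum.inl a) y ∧ ¬ G.VisibleCond (Sum.inl a) y) ∨
      G.circArrow (Sum.inl a) y) then some Mark.arrow
  else if y ∈ G.outputs ∧ (G.undir (Sum.inl a) y ∨
      (G.circTail (Sum.inl a) y ∧ ∃ c, G.undir c y)) then some Mark.tail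
  else if y ∈ G.outputs ∧ (G.tailCirc (Sum.inl a) y ∨ G.circCirc (Sum.inl a) y ∨
      (G.circTail (Sum.inl a) y ∧ ¬ ∃ c, G.undir c y)) then some Mark.circle
  else none

/-- Generic soft-manipulation step on a graph over `N ⊕ N`: for each `a ∈ A` not
already an input, the regime node `I_a = Sum.inr a` is added as an input node,
with edges (and end marks) prescribed by `target`; the mark at `I_a` on each new
edge is a tail. -/
def softManipStep {N : Type}
    (target : MixedGraph (N ⊕ N) → N → (N ⊕ N) → Option Mark)
    (G : MixedGraph (N ⊕ N)) (A : Set N) : MixedGraph (N ⊕ N) where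
  inputs := G.inputs ∪ Sum.inr '' {a | a ∈ A ∧ Sum.inl a ∉ G.inputs}
  outputs := G.outputs
  mark := fun x y =>
    match x, y with
    | Sum.inr a, Sum.inr b =>
        if a ∈ A ∧ Sum.inl a ∉ G.inputs then
          (if (target G a (Sum.inr b)).isSome then some Mark.tail else none)
        else if b ∈ A ∧ Sum.inl b ∉ G.inputs then target G b (Sum.inr a)
        else G.mark x y
    | Sum.inr a, Sum.inl v =>
        if a ∈ A ∧ Sum.inl a ∉ G.inputs then
          (if (target G a (Sum.inl v)).isSome then some Mark.tail else none)
        else G.mark x y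
    | Sum.inl v, Sum.inr a =>
        if a ∈ A ∧ Sum.inl a ∉ G.inputs then target G a (Sum.inl v)
        else G.mark x y
    | Sum.inl _, Sum.inl _ => G.mark x y

/-- Soft-manipulation step for iMAG-type graphs over `N ⊕ N`. -/
def magSoftManipStep {N : Type} (G : MixedGraph (N ⊕ N)) (A : Set N) :
    MixedGraph (N ⊕ N) :=
  softManipStep magSoftTarget G A

/-- The soft-manipulated iMAG `M_{do(I_A)}`, over node type `N ⊕ N`. -/
def magSoftManip {N : Type} (M : MixedGraph N) (A : Set N) : MixedGraph (N ⊕ N) :=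
  magSoftManipStep M.sumInl A

/-- The soft-manipulated iPAG `P_{do(I_A)}`, over node type `N ⊕ N`. -/
def pagSoftManip {N : Type} (P : MixedGraph N) (A : Set N) : MixedGraph (N ⊕ N) :=
  softManipStep pagSoftTarget P.sumInl A

/-- Hard manipulation `do(T)` of an iPAG-type graph: as for iMAGs, but in addition
every remaining circle mark at a manipulated node is replaced by a tail. -/
def pagHardManip {N : Type} (G : MixedGraph N) (T : Set N) : MixedGraph N where
  inputs := G.inputs ∪ T
  outputs := G.outputs \ T
  mark := fun x y =>
    if (x ∈ T ∧ x ∉ G.inputs ∧ G.mark x y = some Mark.arrow) ∨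
        (y ∈ T ∧ y ∉ G.inputs ∧ G.mark y x = some Mark.arrow) ∨
        ((x ∈ T ∨ x ∈ G.inputs) ∧ (y ∈ T ∨ y ∈ G.inputs)) then none
    else if x ∈ T ∧ x ∉ G.inputs ∧ y ∈ G.outputs ∧ y ∉ T ∧
        G.mark x y = some Mark.circle then some Mark.tail
    else G.mark x y

/-- Orient all circle marks of `G` as tails. -/
def orientCirclesTails {N : Type} (G : MixedGraph N) : MixedGraph N :=
  { G with
    mark := fun x y =>
      (G.mark x y).map (fun m => if m = Mark.circle then Mark.tail else m) }

/-- There is a pc-connecting path from `a` to `b` in `G`: a single edge between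
`a` and `b` that is not a visible directed edge, or a path
`a *→ v₁ ↔ ⋯ ↔ v_{n−1} ←* b` (`n > 1`) none of whose edges is visible directed. -/
def PcConn {N : Type} (G : MixedGraph N) (a b : N) : Prop :=
  (G.adj a b ∧ ¬ G.VisibleDir a b ∧ ¬ G.VisibleDir b a) ∨
  (∃ w : GWalk G, w.IsPath ∧ 1 < w.len ∧ w.first = a ∧ w.last = b ∧
    G.mark (w.f 1) (w.f 0) = some Mark.arrow ∧
    G.mark (w.f (w.len - 1)) (w.f w.len) = some Mark.arrow ∧
    (∀ i, 1 ≤ i → i < w.len - 1 → G.bidir (w.f i) (w.f (i + 1))) ∧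
    (∀ i < w.len, ¬ G.VisibleDir (w.f i) (w.f (i + 1)) ∧
      ¬ G.VisibleDir (w.f (i + 1)) (w.f i)))

/-- The pc-component of `b` in `G`. -/
def pcSet {N : Type} (G : MixedGraph N) (b : N) : Set N := {a | PcConn G a b}

/-- The region of a set `B` in `G`: all nodes in the bucket of some node
pc-connected to a node of `B`. -/
def regionSet {N : Type} (G : MixedGraph N) (B : Set N) : Set N :=
  {a | ∃ b ∈ B, ∃ c, PcConn G c b ∧ G.SameBucket a c}

/-- `S` is a bucket of `G`. -/
def IsBucket {N : Type} (G : MixedGraph N) (S : Set N) : Prop :=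
  ∃ a ∈ G.nodes, S = {x | G.SameBucket x a}

/-- FCI rule R1 (closure form): if `k *→ j` with the edge between `j` and `i`
carrying a circle at `j`, `i` and `k` non-adjacent and `i` not an input node,
then that edge is `j → i`. -/
def FciR1 {N : Type} (P : MixedGraph N) : Prop :=
  ∀ i j k, P.mark j k = some Mark.arrow → ¬ P.adj i k → i ∉ P.inputs →
    P.mark j i = some Mark.circle → P.dir j i

/-- FCI rule R2 (closure form): if `i → j *→ k` or `i *→ j → k` with the edge
between `i` and `k` carrying a circle at `k`, then that edge has an arrowhead at `k`. -/
def FciR2 {N : Type} (P : MixedGraph N) : Prop :=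
  ∀ i j k, ((P.dir i j ∧ P.mark k j = some Mark.arrow) ∨
      (P.mark j i = some Mark.arrow ∧ P.dir j k)) →
    P.mark k i = some Mark.circle → P.mark k i = some Mark.arrow

/-- FCI rule R4 (closure form): for every discriminating path `⟨a,…,y,z⟩` for `y`,
the mark at `y` on the edge between `y` and `z` is not a circle. -/
def FciR4 {N : Type} (P : MixedGraph N) : Prop :=
  ∀ w : GWalk P, w.IsPath → 3 ≤ w.len → ¬ P.adj (w.f 0) (w.f w.len) →
    (∀ i, 0 < i → i < w.len - 1 → w.ColliderAt i ∧ P.dir (w.f i) (w.f w.len)) →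
    P.mark (w.f (w.len - 1)) (w.f w.len) ≠ some Mark.circle

/-- Property (P2) of iSOPAGs: no `a *→ b` together with `b −∘ c`, and no
`a *→ b` together with `b ∘− c`. -/
def SopagP2 {N : Type} (P : MixedGraph N) : Prop :=
  ∀ a b c, P.mark b a = some Mark.arrow → ¬ P.tailCirc b c ∧ ¬ P.circTail b c

/-- Property (P3) of iSOPAGs: if `a *→ b` and the edge between `b` and `c` has a
circle at `b`, then `a *→ c`. -/
def SopagP3 {N : Type} (P : MixedGraph N) : Prop :=
  ∀ a b c, P.mark b a = some Mark.arrow → P.mark b c = some Mark.circle →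
    P.mark c a = some Mark.arrow

/-- `P` is an iSOPAG: an iPAG representing some isADMG, closed under the FCI
orientation rules (R1, R2, R4), and satisfying (P2) and (P3). -/
def IsISOPAG {N : Type} (P : MixedGraph N) : Prop :=
  P.IsIPAG ∧ (∃ A : SADMG N, A.WF ∧ RepresentsS P A) ∧
  FciR1 P ∧ FciR2 P ∧ FciR4 P ∧ SopagP2 P ∧ SopagP3 P

section Statement10Aux

variable {N : Type}

/-- Walk-form visibility witness: a walk `c *→ u₁ ↔ ⋯ ↔ a` (length `m ≥ 1`)
whose interior nodes are all parents of `b`. -/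
def WalkWit (M : MixedGraph N) (b c a : N) : Prop :=
  ∃ m : ℕ, 1 ≤ m ∧ ∃ u : ℕ → N, u 0 = c ∧ u m = a ∧
    M.mark (u 1) (u 0) = some Mark.arrow ∧
    (∀ i, 1 ≤ i → i < m → M.bidir (u i) (u (i + 1))) ∧
    (∀ i, 1 ≤ i → i < m → M.dir (u i) b)

lemma dir_adj {M : MixedGraph N} {x y : N} (h : M.dir x y) : M.adj x y := by
  unfold MixedGraph.adj; rw [h.1]; rfl

lemma walkWit_vis (M : MixedGraph N)
    (hsym : ∀ x y, (M.mark x y).isSome → (M.mark y x).isSome)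
    {a b c : N} (hab : M.adj a b) (hcb : c ≠ b) (hcadj : ¬ M.adj c b)
    (hw : WalkWit M b c a) : M.VisibleCond a b := by
  classical
  have hP : ∃ m : ℕ, 1 ≤ m ∧ ∃ u : ℕ → N, u 0 = c ∧ u m = a ∧
      M.mark (u 1) (u 0) = some Mark.arrow ∧
      (∀ i, 1 ≤ i → i < m → M.bidir (u i) (u (i + 1))) ∧
      (∀ i, 1 ≤ i → i < m → M.dir (u i) b) := hw
  obtain ⟨hm1, u, hu0, hum, hfst, hbid, hdirb⟩ := Nat.find_spec hP
  set m₀ := Nat.find hP with hm₀def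
  have key : ∀ i j, i < j → j ≤ m₀ → u i ≠ u j := by
    intro i j hij hjm heq
    rcases Nat.eq_zero_or_pos i with hi0 | hi1
    · subst hi0
      rcases eq_or_lt_of_le hjm with hjeq | hjlt
      · apply hcadj
        have : c = a := by rw [← hu0, heq, hjeq, hum]
        rw [this]; exact hab
      · apply hcadj
        have := hdirb j (by omega) hjlt
        rw [← hu0, heq]; exact dir_adj this
    · rcases eq_or_lt_of_le hjm with hjeq | hjlt
      · refine absurd ?_ (Nat.find_min hP (show i < m₀ by omega))
        exact ⟨hi1, u, hu0, by rw [heq, hjeq, hum], hfst,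
          fun k hk1 hk2 => hbid k hk1 (by omega),
          fun k hk1 hk2 => hdirb k hk1 (by omega)⟩
      · have hm' : m₀ - (j - i) < m₀ := by omega
        refine absurd ?_ (Nat.find_min hP hm')
        set v : ℕ → N := fun k => if k ≤ i then u k else u (k + (j - i)) with hvdef
        have hv1 : ∀ k, k ≤ i → v k = u k := fun k hk => if_pos hk
        have hv2 : ∀ k, ¬ (k ≤ i) → v k = u (k + (j - i)) := fun k hk => if_neg hk
        refine ⟨by omega, v, ?_, ?_, ?_, ?_, ?_⟩
        · rw [hv1 0 (Nat.zero_le i), hu0]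
        · rw [hv2 _ (by omega)]
          have h2 : m₀ - (j - i) + (j - i) = m₀ := by omega
          rw [h2, hum]
        · rw [hv1 1 (by omega), hv1 0 (Nat.zero_le i)]
          exact hfst
        · intro k hk1 hk2
          by_cases hki : k + 1 ≤ i
          · rw [hv1 k (by omega), hv1 (k + 1) hki]
            exact hbid k hk1 (by omega)
          · by_cases hki' : k ≤ i
            · have hk : k = i := by omega
              rw [hv1 k hki', hv2 (k + 1) hki, hk, heq]
              have h3 : i + 1 + (j - i) = j + 1 := by omega
              rw [h3]
              exact hbid j (by omega) (by omega)
            · rw [hv2 k hki', hv2 (k + 1) (by omega)]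
              have h3 : k + 1 + (j - i) = k + (j - i) + 1 := by omega
              rw [h3]
              exact hbid (k + (j - i)) (by omega) (by omega)
        · intro k hk1 hk2
          by_cases hki' : k ≤ i
          · rw [hv1 k hki']; exact hdirb k hk1 (by omega)
          · rw [hv2 k hki']; exact hdirb (k + (j - i)) (by omega) (by omega)
  rcases eq_or_lt_of_le hm1 with h1 | h2
  · refine Or.inr ⟨c, hcb, hcadj, Or.inl ?_⟩
    rw [← hu0, ← hum, ← h1]
    exact hfst
  · have hadjw : ∀ i < m₀, M.adj (u i) (u (i + 1)) := by
      intro i hi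
      rcases Nat.eq_zero_or_pos i with rfl | hi1
      · show (M.mark (u 0) (u 1)).isSome
        apply hsym; rw [hfst]; rfl
      · show (M.mark (u i) (u (i + 1))).isSome
        rw [(hbid i hi1 hi).1]; rfl
    refine Or.inr ⟨c, hcb, hcadj, Or.inr ⟨⟨m₀, u, hadjw⟩, ?_, h2, hu0, hum, hfst, hbid, hdirb⟩⟩
    intro i hi j hj heq
    rcases lt_trichotomy i j with h | h | h
    · exact absurd heq (key i j h hj)
    · exact h
    · exact absurd heq.symm (key j i h hi)

lemma vis_walkWit {M : MixedGraph N} {a b : N} (h : M.VisibleCond a b) :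
    a ∈ M.inputs ∨ ∃ c, c ≠ b ∧ ¬ M.adj c b ∧ WalkWit M b c a := by
  rcases h with h | ⟨c, hcb, hcadj, h⟩
  · exact Or.inl h
  · refine Or.inr ⟨c, hcb, hcadj, ?_⟩
    rcases h with h | ⟨w, hp, hlen, hf, hl, h1, hbid, hdir⟩
    · exact ⟨1, le_refl 1, fun i => if i = 0 then c else a, by simp, by simp,
        by simpa using h, fun i h1 h2 => absurd (lt_of_le_of_lt h1 h2) (by omega),
        fun i h1 h2 => absurd (lt_of_le_of_lt h1 h2) (by omega)⟩
    · exact ⟨w.len, by omega, w.f, hf, hl, h1, hbid, hdir⟩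

lemma walkWit_extend {M : MixedGraph N} {b c x y : N} (h : WalkWit M b c x)
    (hxb : M.dir x b) (hxy : M.bidir x y) : WalkWit M b c y := by
  obtain ⟨m, hm1, u, hu0, hum, hfst, hbid, hdirb⟩ := h
  set v : ℕ → N := fun k => if k ≤ m then u k else y with hvdef
  have hv1 : ∀ k, k ≤ m → v k = u k := fun k hk => if_pos hk
  have hv2 : ∀ k, ¬ (k ≤ m) → v k = y := fun k hk => if_neg hk
  refine ⟨m + 1, by omega, v, ?_, ?_, ?_, ?_, ?_⟩
  · rw [hv1 0 (Nat.zero_le m), hu0]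
  · rw [hv2 (m + 1) (by omega)]
  · rw [hv1 1 hm1, hv1 0 (Nat.zero_le m)]; exact hfst
  · intro k hk1 hk2
    by_cases hkm : k + 1 ≤ m
    · rw [hv1 k (by omega), hv1 (k + 1) hkm]
      exact hbid k hk1 (by omega)
    · have hk : k = m := by omega
      rw [hv1 k (by omega), hv2 (k + 1) hkm]
      subst hk; rw [hum]; exact hxy
  · intro k hk1 hk2
    rw [hv1 k (by omega)]
    by_cases hkm : k < m
    · exact hdirb k hk1 hkm
    · have hk : k = m := by omega
      subst hk; rw [hum]; exact hxb

end Statement10Aux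

section Statement10Aux2

variable {N : Type}

lemma mark_tail_or_arrow {M : MixedGraph N} (hM : M.IsIMAG) {x y : N}
    (h : (M.mark x y).isSome) :
    M.mark x y = some Mark.tail ∨ M.mark x y = some Mark.arrow := by
  rcases hmk : M.mark x y with _ | m
  · rw [hmk] at h; simp at h
  · cases m
    · exact Or.inl rfl
    · exact Or.inr rfl
    · exact absurd hmk (hM.2 x y)

lemma anc_of_dir {M : MixedGraph N} {x y : N} (h : M.dir x y) : M.anc x y :=
  Relation.ReflTransGen.single h

/-- Key step: if `d → a` is invisible, `d → b` is visible, and `d → a`, `a → b`,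
`d → b` are all edges, then `a → b` is visible. -/
lemma visible_step (M : MixedGraph N) (hM : M.IsIMAG) {d a b : N}
    (hda : M.dir d a) (hab : M.dir a b) (hdb : M.dir d b)
    (hnv : ¬ M.VisibleCond d a) (hv : M.VisibleCond d b) :
    M.VisibleCond a b := by
  classical
  have hWF := hM.1.1
  have hInpArr := hM.1.2.1
  have hDirAnc := hM.1.2.2.2.1
  have hAncBid := hM.1.2.2.2.2.1
  have hTri := hM.1.2.2.2.2.2.1
  have hsym : ∀ x y, (M.mark x y).isSome → (M.mark y x).isSome := hWF.2.2.2.1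
  have hdinp : d ∉ M.inputs := fun h => hnv (Or.inl h)
  have hadjab : M.adj a b := dir_adj hab
  rcases vis_walkWit hv with h | ⟨c, hcb, hcadj, m, hm1, u, hu0, hum, hfst, hbid, hdirI⟩
  · exact absurd h hdinp
  by_cases hex : ∃ i, 1 ≤ i ∧ i < m ∧ ¬ M.dir (u i) a
  · -- a maximal such index
    obtain ⟨i0, hi01, hi0m, hi0nd⟩ := hex
    set Q : ℕ → Prop := fun i => 1 ≤ i ∧ i < m ∧ ¬ M.dir (u i) a with hQdef
    set j := Nat.findGreatest Q m with hjdef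
    have hQj : Q j := Nat.findGreatest_spec (le_of_lt hi0m) ⟨hi01, hi0m, hi0nd⟩
    obtain ⟨hj1, hjm, hjnd⟩ := hQj
    have hmax : ∀ k, j < k → k < m → M.dir (u k) a := by
      intro k h1 h2
      by_contra hk
      exact Nat.findGreatest_is_greatest h1 (le_of_lt h2) ⟨by omega, h2, hk⟩
    have hsuf : WalkWit M a (u j) d := by
      refine ⟨m - j, by omega, fun k => u (j + k), by simp, ?_, ?_, ?_, ?_⟩
      · show u (j + (m - j)) = d
        rw [show j + (m - j) = m by omega, hum]
      · show M.mark (u (j + 1)) (u (j + 0)) = some Mark.arrow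
        rw [show j + 0 = j from rfl]
        exact (hbid j hj1 hjm).2
      · intro k hk1 hk2
        show M.bidir (u (j + k)) (u (j + k + 1))
        have h3 : j + (k + 1) = j + k + 1 := by omega
        rw [← h3]
        exact (by rw [h3]; exact hbid (j + k) (by omega) (by omega))
      · intro k hk1 hk2
        exact hmax (j + k) (by omega) (by omega)
    have hcja : u j = a ∨ M.adj (u j) a := by
      by_contra hcon; push_neg at hcon
      exact hnv (walkWit_vis M hsym (dir_adj hda) hcon.1 hcon.2 hsuf)
    rcases hcja with hja | hadjja
    · exact walkWit_vis M hsym hadjab hcb hcadj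
        ⟨j, hj1, u, hu0, hja, hfst, fun k h1 h2 => hbid k h1 (by omega),
          fun k h1 h2 => hdirI k h1 (by omega)⟩
    · have hy : M.dir (u (j + 1)) a := by
        rcases eq_or_lt_of_le (show j + 1 ≤ m by omega) with he | hl
        · rw [he, hum]; exact hda
        · exact hmax (j + 1) (by omega) hl
      have hs : (M.mark a (u j)).isSome := hsym _ _ hadjja
      rcases mark_tail_or_arrow hM hadjja with hja1 | hja1 <;>
        rcases mark_tail_or_arrow hM hs with hja2 | hja2
      · -- undirected u j − a : contradicts arrowhead at u j
        exact absurd ⟨hja1, hja2⟩ (hTri (u (j + 1)) (u j) a (hbid j hj1 hjm).1)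
      · -- dir (u j) a : contradicts choice of j
        exact absurd ⟨hja1, hja2⟩ hjnd
      · -- dir a (u j) : almost-directed cycle
        have hanc : M.anc (u (j + 1)) (u j) := (anc_of_dir hy).trans (anc_of_dir ⟨hja2, hja1⟩)
        exact absurd (hbid j hj1 hjm) (hAncBid _ _ hanc)
      · -- bidir (u j) a : extend the walk to a
        have htr : WalkWit M b c (u j) :=
          ⟨j, hj1, u, hu0, rfl, hfst, fun k h1 h2 => hbid k h1 (by omega),
            fun k h1 h2 => hdirI k h1 (by omega)⟩
        exact walkWit_vis M hsym hadjab hcb hcadj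
          (walkWit_extend htr (hdirI j hj1 hjm) ⟨hja1, hja2⟩)
  · push_neg at hex
    have hall : ∀ i, 1 ≤ i → i < m → M.dir (u i) a := hex
    have hwda : WalkWit M a c d := ⟨m, hm1, u, hu0, hum, hfst, hbid, hall⟩
    have hca : c = a ∨ M.adj c a := by
      by_contra hcon; push_neg at hcon
      exact hnv (walkWit_vis M hsym (dir_adj hda) hcon.1 hcon.2 hwda)
    rcases hca with rfl | hca
    · exact absurd hadjab hcadj
    · have hs1 : (M.mark a c).isSome := hsym c a hca
      rcases mark_tail_or_arrow hM hs1 with hac1 | hac1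
      · rcases mark_tail_or_arrow hM hca with hac2 | hac2
        · -- undirected a − c : contradicts arrowhead at a from d → a
          exact absurd ⟨hac1, hac2⟩ (hTri d a c hda.2)
        · -- dir a c : derive contradiction via u 1
          have hx1 : M.mark (u 1) c = some Mark.arrow := by rw [← hu0]; exact hfst
          have hxa : M.dir (u 1) a := by
            rcases eq_or_lt_of_le hm1 with he | hl
            · rw [show (1 : ℕ) = m from he, hum]; exact hda
            · exact hall 1 le_rfl hl
          have hac : M.dir a c := ⟨hac1, hac2⟩
          have hs2 : (M.mark c (u 1)).isSome := by
            apply hsym; rw [hx1]; rfl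
          rcases mark_tail_or_arrow hM hs2 with hc1 | hc1
          · -- dir c (u 1) : cycle a → c → u 1 → a
            have hanc : M.anc c a := (anc_of_dir ⟨hc1, hx1⟩).trans (anc_of_dir hxa)
            exact absurd hanc (hDirAnc a c hac)
          · -- bidir (u 1) c with anc (u 1) c
            have hanc : M.anc (u 1) c := (anc_of_dir hxa).trans (anc_of_dir hac)
            exact absurd ⟨hc1, hx1⟩ (hAncBid _ _ hanc)
      · -- arrowhead at a on edge a − c : direct witness
        exact walkWit_vis M hsym hadjab hcb hcadj
          ⟨1, le_rfl, fun i => if i = 0 then c else a, by simp, by simp,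
            by simpa using hac1, fun i h1 h2 => absurd (lt_of_le_of_lt h1 h2) (by omega),
            fun i h1 h2 => absurd (lt_of_le_of_lt h1 h2) (by omega)⟩

end Statement10Aux2

section Statement10Aux3

variable {N : Type}

lemma sumInl_mark_inl (M : MixedGraph N) (x y : N) :
    (M.sumInl : MixedGraph (N ⊕ N)).mark (Sum.inl x) (Sum.inl y) = M.mark x y := rfl

lemma sumInl_mark_inr_left (M : MixedGraph N) (d : N) (q : N ⊕ N) :
    (M.sumInl : MixedGraph (N ⊕ N)).mark (Sum.inr d) q = none := by cases q <;> rfl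

lemma sumInl_mark_inr_right (M : MixedGraph N) (p : N ⊕ N) (d : N) :
    (M.sumInl : MixedGraph (N ⊕ N)).mark p (Sum.inr d) = none := by cases p <;> rfl

lemma sumInl_inputs_inl (M : MixedGraph N) (x : N) :
    Sum.inl x ∈ (M.sumInl : MixedGraph (N ⊕ N)).inputs ↔ x ∈ M.inputs := by
  simp [MixedGraph.sumInl]

lemma sumInl_outputs_inl (M : MixedGraph N) (x : N) :
    Sum.inl x ∈ (M.sumInl : MixedGraph (N ⊕ N)).outputs ↔ x ∈ M.outputs := by
  simp [MixedGraph.sumInl]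

lemma sumInl_outputs_inr (M : MixedGraph N) (z : N) :
    Sum.inr z ∉ (M.sumInl : MixedGraph (N ⊕ N)).outputs := by
  simp [MixedGraph.sumInl]

lemma target_inr (G : MixedGraph (N ⊕ N)) (hG : ∀ z : N, Sum.inr z ∉ G.outputs)
    (x e : N) : magSoftTarget G x (Sum.inr e) = none := by
  unfold magSoftTarget
  rw [if_neg (by simp), if_neg (by simp [hG e]), if_neg (by simp [hG e])]

lemma manip_mark_inl_inl (M : MixedGraph N) (D : Set N) (x y : N) :
    (magSoftManip M D).mark (Sum.inl x) (Sum.inl y) = M.mark x y := rfl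

lemma manip_mark_inl_inr (M : MixedGraph N) (D : Set N) (v d : N) :
    (magSoftManip M D).mark (Sum.inl v) (Sum.inr d) =
      if d ∈ D ∧ Sum.inl d ∉ (M.sumInl : MixedGraph (N ⊕ N)).inputs then magSoftTarget (M.sumInl : MixedGraph (N ⊕ N)) d (Sum.inl v)
      else none := by
  show (if d ∈ D ∧ Sum.inl d ∉ (M.sumInl : MixedGraph (N ⊕ N)).inputs then magSoftTarget (M.sumInl : MixedGraph (N ⊕ N)) d (Sum.inl v)
      else (M.sumInl : MixedGraph (N ⊕ N)).mark (Sum.inl v) (Sum.inr d)) = _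
  rw [sumInl_mark_inr_right]

lemma manip_mark_inr_inl (M : MixedGraph N) (D : Set N) (d v : N) :
    (magSoftManip M D).mark (Sum.inr d) (Sum.inl v) =
      if d ∈ D ∧ Sum.inl d ∉ (M.sumInl : MixedGraph (N ⊕ N)).inputs then
        (if (magSoftTarget (M.sumInl : MixedGraph (N ⊕ N)) d (Sum.inl v)).isSome then some Mark.tail else none)
      else none := by
  show (if d ∈ D ∧ Sum.inl d ∉ (M.sumInl : MixedGraph (N ⊕ N)).inputs then
      (if (magSoftTarget (M.sumInl : MixedGraph (N ⊕ N)) d (Sum.inl v)).isSome then some Mark.tail else none)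
      else (M.sumInl : MixedGraph (N ⊕ N)).mark (Sum.inr d) (Sum.inl v)) = _
  rw [sumInl_mark_inr_left]

lemma manip_mark_inr_not_arrow (M : MixedGraph N) (D : Set N) (d : N) (q : N ⊕ N) :
    (magSoftManip M D).mark (Sum.inr d) q ≠ some Mark.arrow := by
  cases q with
  | inl v =>
    rw [manip_mark_inr_inl]
    split_ifs <;> simp
  | inr e =>
    show (if d ∈ D ∧ Sum.inl d ∉ (M.sumInl : MixedGraph (N ⊕ N)).inputs then
        (if (magSoftTarget (M.sumInl : MixedGraph (N ⊕ N)) d (Sum.inr e)).isSome then some Mark.tail else none)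
      else if e ∈ D ∧ Sum.inl e ∉ (M.sumInl : MixedGraph (N ⊕ N)).inputs then magSoftTarget (M.sumInl : MixedGraph (N ⊕ N)) e (Sum.inr d)
      else (M.sumInl : MixedGraph (N ⊕ N)).mark (Sum.inr d) (Sum.inr e)) ≠ some Mark.arrow
    rw [sumInl_mark_inr_left, target_inr (M.sumInl : MixedGraph (N ⊕ N)) (sumInl_outputs_inr M),
      target_inr (M.sumInl : MixedGraph (N ⊕ N)) (sumInl_outputs_inr M)]
    split_ifs <;> simp

lemma manip_inputs_inl (M : MixedGraph N) (D : Set N) (x : N) :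
    Sum.inl x ∈ (magSoftManip M D).inputs ↔ x ∈ M.inputs := by
  show Sum.inl x ∈ (M.sumInl : MixedGraph (N ⊕ N)).inputs ∪ Sum.inr '' {a | a ∈ D ∧ Sum.inl a ∉ (M.sumInl : MixedGraph (N ⊕ N)).inputs} ↔ _
  simp [MixedGraph.sumInl]

/-- Lifting visibility from `M` to a graph over `N ⊕ N` that contains `M` on the
`inl` nodes with identical marks there. -/
lemma vis_lift (M : MixedGraph N) (K : MixedGraph (N ⊕ N))
    (hmark : ∀ x y, K.mark (Sum.inl x) (Sum.inl y) = M.mark x y)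
    (hinp : ∀ x, x ∈ M.inputs → Sum.inl x ∈ K.inputs)
    {a b : N} (h : M.VisibleCond a b) : K.VisibleCond (Sum.inl a) (Sum.inl b) := by
  rcases h with h | ⟨c, hcb, hcadj, h⟩
  · exact Or.inl (hinp a h)
  · refine Or.inr ⟨Sum.inl c, by simpa using hcb, ?_, ?_⟩
    · show ¬ (K.mark (Sum.inl c) (Sum.inl b)).isSome = true
      rw [hmark]; exact hcadj
    rcases h with h | ⟨w, hp, hl2, hf, hla, h1, hbid, hdir⟩
    · left; rw [hmark]; exact h
    · right
      refine ⟨⟨w.len, fun i => Sum.inl (w.f i), ?_⟩, ?_, hl2, ?_, ?_, ?_, ?_, ?_⟩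
      · intro i hi
        show (K.mark (Sum.inl (w.f i)) (Sum.inl (w.f (i + 1)))).isSome = true
        rw [hmark]; exact w.hadj i hi
      · intro i hi j hj heq
        exact hp i hi j hj (by simpa using heq)
      · show Sum.inl (w.f 0) = Sum.inl c
        rw [show w.f 0 = c from hf]
      · show Sum.inl (w.f w.len) = Sum.inl a
        rw [show w.f w.len = a from hla]
      · show K.mark (Sum.inl (w.f 1)) (Sum.inl (w.f 0)) = some Mark.arrow
        rw [hmark]; exact h1
      · intro i hi1 hi2
        exact ⟨by rw [hmark]; exact (hbid i hi1 hi2).1, by rw [hmark]; exact (hbid i hi1 hi2).2⟩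
      · intro i hi1 hi2
        exact ⟨by rw [hmark]; exact (hdir i hi1 hi2).1, by rw [hmark]; exact (hdir i hi1 hi2).2⟩

/-- Visibility in `(M.sumInl : MixedGraph (N ⊕ N))` descends to `M`. -/
lemma vis_g0_down (M : MixedGraph N)
    (hsym : ∀ x y, (M.mark x y).isSome → (M.mark y x).isSome)
    {x y : N} (hadjxy : M.adj x y)
    (h : (M.sumInl : MixedGraph (N ⊕ N)).VisibleCond (Sum.inl x) (Sum.inl y)) : M.VisibleCond x y := by
  rcases h with h | ⟨c', hcb, hcadj, h⟩
  · exact Or.inl ((sumInl_inputs_inl M x).1 h)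
  · rcases h with h | ⟨w, hp, hlen, hf, hl, h1, hbid, hdir⟩
    · cases c' with
      | inr d => rw [sumInl_mark_inr_right] at h; exact absurd h (by simp)
      | inl c =>
        refine Or.inr ⟨c, fun hh => hcb (by rw [hh]), ?_, Or.inl h⟩
        exact fun hh => hcadj hh
    · have hinl : ∀ i ≤ w.len, ∃ z, w.f i = Sum.inl z := by
        intro i hi
        rcases eq_or_lt_of_le hi with he | hlt
        · have hA := w.hadj (w.len - 1) (by omega)
          rw [show w.len - 1 + 1 = w.len by omega] at hA
          cases hq : w.f w.len with
          | inl z => exact ⟨z, by rw [he, hq]⟩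
          | inr z =>
            exfalso
            unfold MixedGraph.adj at hA
            rw [hq, sumInl_mark_inr_right] at hA
            simp at hA
        · have hA := w.hadj i hlt
          cases hq : w.f i with
          | inl z => exact ⟨z, rfl⟩
          | inr z =>
            exfalso
            unfold MixedGraph.adj at hA
            rw [hq, sumInl_mark_inr_left] at hA
            simp at hA
      set u : ℕ → N := fun i => Sum.elim id id (w.f i) with hudef
      have hfi : ∀ i ≤ w.len, w.f i = Sum.inl (u i) := by
        intro i hi
        obtain ⟨z, hz⟩ := hinl i hi
        rw [hudef]; simp only []; rw [hz]; rfl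
      have hc'eq : c' = Sum.inl (u 0) := by
        rw [← hf]; exact hfi 0 (by omega)
      have hux : u w.len = x := by
        have h0 := hfi w.len le_rfl
        have h2 : (Sum.inl x : N ⊕ N) = Sum.inl (u w.len) := by
          rw [← hl]; exact h0
        exact (Sum.inl.inj h2).symm
      refine walkWit_vis M hsym hadjxy ?_ ?_ ⟨w.len, by omega, u, rfl, hux, ?_, ?_, ?_⟩
      · intro hh
        exact hcb (by rw [hc'eq, hh])
      · intro hh
        apply hcadj
        show ((M.sumInl : MixedGraph (N ⊕ N)).mark c' (Sum.inl y)).isSome = true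
        rw [hc'eq, sumInl_mark_inl]
        exact hh
      · have h1' := h1
        rw [hfi 1 (by omega), hfi 0 (by omega)] at h1'
        exact h1'
      · intro i hi1 hi2
        have hb := hbid i hi1 hi2
        rw [hfi i (by omega), hfi (i + 1) (by omega)] at hb
        exact hb
      · intro i hi1 hi2
        have hd := hdir i hi1 hi2
        rw [hfi i (by omega)] at hd
        exact hd

end Statement10Aux3

section Statement10Aux4

variable {N : Type}

/-- Core witness extraction: given `v1 → b`, `d → v1` invisible, and suitable
non-adjacency information about `d` and `b`, produce a walk witness into `v1`. -/
lemma core_witness (M : MixedGraph N) (hM : M.IsIMAG) {d v1 b : N}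
    (hv1b : M.dir v1 b) (hdv1 : M.dir d v1) (hnv : ¬ M.VisibleCond d v1)
    (hbd : b ≠ d) (hnund : ¬ M.undir d b)
    (hvisOr : M.dir d b → M.VisibleCond d b) :
    ∃ c0, c0 ≠ b ∧ ¬ M.adj c0 b ∧ WalkWit M b c0 v1 := by
  classical
  have hDirAnc := hM.1.2.2.2.1
  have hAncBid := hM.1.2.2.2.2.1
  have hInpArr := hM.1.2.1
  have hsym : ∀ x y, (M.mark x y).isSome → (M.mark y x).isSome := hM.1.1.2.2.2.1
  by_cases hadj : M.adj d b
  · have hs := hsym d b hadj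
    rcases mark_tail_or_arrow hM hadj with h1 | h1 <;>
      rcases mark_tail_or_arrow hM hs with h2 | h2
    · exact absurd ⟨h1, h2⟩ hnund
    · -- dir d b
      have hvdb := hvisOr ⟨h1, h2⟩
      have hvis := visible_step M hM hdv1 hv1b ⟨h1, h2⟩ hnv hvdb
      rcases vis_walkWit hvis with h | h
      · exact absurd hdv1.2 (hInpArr v1 h d)
      · exact h
    · -- dir b d : almost cycle
      have hanc : M.anc d b := (anc_of_dir hdv1).trans (anc_of_dir hv1b)
      exact absurd hanc (hDirAnc b d ⟨h2, h1⟩)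
    · -- bidir d b
      have hanc : M.anc d b := (anc_of_dir hdv1).trans (anc_of_dir hv1b)
      exact absurd ⟨h2, h1⟩ (hAncBid d b hanc)
  · exact ⟨d, fun h => hbd h.symm, hadj,
      1, le_rfl, fun i => if i = 0 then d else v1, by simp, by simp,
      by simpa using hdv1.2, fun i ha hb => absurd (lt_of_le_of_lt ha hb) (by omega),
      fun i ha hb => absurd (lt_of_le_of_lt ha hb) (by omega)⟩

lemma target_self_isSome (G : MixedGraph (N ⊕ N)) (d : N) :
    (magSoftTarget G d (Sum.inl d)).isSome := by
  unfold magSoftTarget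
  rw [if_pos rfl]
  split_ifs <;> rfl

end Statement10Aux4

/-- Let `M` be an iMAG and `D ⊆ I ∪ V`.  A directed edge `a → b`
with `a, b` output nodes is visible in `M` if and only if it is visible in the
soft-manipulated graph `M_{do(I_D)}`. -/
theorem statement10 {N : Type} (M : MixedGraph N) (hM : M.IsIMAG)
    (D : Set N) (hD : D ⊆ M.nodes)
    (a b : N) (ha : a ∈ M.outputs) (hb : b ∈ M.outputs) (hdir : M.dir a b) :
    M.VisibleDir a b ↔ (magSoftManip M D).VisibleDir (Sum.inl a) (Sum.inl b) := by
  classical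
  have hWF := hM.1.1
  have hsym : ∀ x y, (M.mark x y).isSome → (M.mark y x).isSome := hWF.2.2.2.1
  have hirr : ∀ x, M.mark x x = none := hWF.2.2.2.2.1
  have hadjab : M.adj a b := dir_adj hdir
  have hdirH : (magSoftManip M D).dir (Sum.inl a) (Sum.inl b) := ⟨hdir.1, hdir.2⟩
  have hboutG0 : Sum.inl b ∈ (M.sumInl : MixedGraph (N ⊕ N)).outputs :=
    (sumInl_outputs_inl M b).2 hb
  have hadjInfo : ∀ d : N, (d ∈ D ∧ Sum.inl d ∉ (M.sumInl : MixedGraph (N ⊕ N)).inputs) →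
      ¬ (magSoftManip M D).adj (Sum.inr d) (Sum.inl b) →
      b ≠ d ∧ ¬ M.undir d b ∧ (M.dir d b → M.VisibleCond d b) := by
    intro d hd hnadj
    have htgt : magSoftTarget (M.sumInl : MixedGraph (N ⊕ N)) d (Sum.inl b) = none := by
      by_contra hcon
      apply hnadj
      show ((magSoftManip M D).mark (Sum.inr d) (Sum.inl b)).isSome = true
      rw [manip_mark_inr_inl, if_pos hd, if_pos (Option.ne_none_iff_isSome.1 hcon)]
      rfl
    have hbd : b ≠ d := by
      intro h
      subst h
      have h2 := target_self_isSome (M.sumInl : MixedGraph (N ⊕ N)) b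
      rw [htgt] at h2
      simp at h2
    unfold magSoftTarget at htgt
    rw [if_neg (show ¬ (Sum.inl b : N ⊕ N) = Sum.inl d by simp [hbd])] at htgt
    split_ifs at htgt with h2 h3
    refine ⟨hbd, ?_, ?_⟩
    · intro hund
      exact h3 ⟨hboutG0, hund.1, hund.2⟩
    · intro hdb
      by_contra hnvdb
      exact h2 ⟨hboutG0, ⟨hdb.1, hdb.2⟩,
        fun hv => hnvdb (vis_g0_down M hsym (dir_adj hdb) hv)⟩
  constructor
  · rintro ⟨_, hvc⟩
    exact ⟨hdirH, vis_lift M (magSoftManip M D)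
      (manip_mark_inl_inl M D) (fun x hx => (manip_inputs_inl M D x).2 hx) hvc⟩
  · rintro ⟨_, hvc⟩
    refine ⟨hdir, ?_⟩
    rcases hvc with h | ⟨c', hcb, hcadj, hcase⟩
    · exact Or.inl ((manip_inputs_inl M D a).1 h)
    rcases hcase with harr | hpath
    · -- direct arrowhead witness
      cases c' with
      | inl c =>
        rw [manip_mark_inl_inl] at harr
        refine Or.inr ⟨c, fun h => hcb (by rw [h]), ?_, Or.inl harr⟩
        intro h
        apply hcadj
        show ((magSoftManip M D).mark (Sum.inl c) (Sum.inl b)).isSome = true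
        rw [manip_mark_inl_inl]
        exact h
      | inr d =>
        rw [manip_mark_inl_inr] at harr
        by_cases hd : d ∈ D ∧ Sum.inl d ∉ (M.sumInl : MixedGraph (N ⊕ N)).inputs
        case neg => rw [if_neg hd] at harr; exact absurd harr (by simp)
        rw [if_pos hd] at harr
        obtain ⟨hbd, hnund, hvisOr⟩ := hadjInfo d hd hcadj
        by_cases had : a = d
        · subst had
          exact hvisOr hdir
        · unfold magSoftTarget at harr
          rw [if_neg (show ¬ (Sum.inl a : N ⊕ N) = Sum.inl d by simp [had])] at harr
          split_ifs at harr with h2 h3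
          · obtain ⟨haout, hdira, hnvis⟩ := h2
            have hdda : M.dir d a := ⟨hdira.1, hdira.2⟩
            have hnv : ¬ M.VisibleCond d a := fun hv =>
              hnvis (vis_lift M _ (sumInl_mark_inl M)
                (fun x hx => (sumInl_inputs_inl M x).2 hx) hv)
            obtain ⟨c0, hc0b, hc0adj, hww⟩ :=
              core_witness M hM hdir hdda hnv hbd hnund hvisOr
            exact walkWit_vis M hsym hadjab hc0b hc0adj hww
          · exact absurd harr (by simp)
    · -- path witness
      obtain ⟨w, hp, hlen, hf, hl, h1, hbidw, hdirw⟩ := hpath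
      have hinl : ∀ i, 1 ≤ i → i ≤ w.len → ∃ z, w.f i = Sum.inl z := by
        intro i hi1 hi2
        rcases eq_or_lt_of_le hi2 with he | hlt
        · exact ⟨a, by rw [he]; exact hl⟩
        · have hb2 := hbidw i hi1 hlt
          cases hq : w.f i with
          | inl z => exact ⟨z, rfl⟩
          | inr z =>
            exfalso
            have h3 := hb2.1
            rw [hq] at h3
            exact manip_mark_inr_not_arrow M D z _ h3
      set u : ℕ → N := fun i => Sum.elim id id (w.f i) with hudef
      have hfi : ∀ i, 1 ≤ i → i ≤ w.len → w.f i = Sum.inl (u i) := by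
        intro i h1' h2'
        obtain ⟨z, hz⟩ := hinl i h1' h2'
        rw [hudef]
        simp only []
        rw [hz]
        rfl
      have hulen : u w.len = a := by
        have h0 := hfi w.len (by omega) le_rfl
        have h2 : (Sum.inl a : N ⊕ N) = Sum.inl (u w.len) := by rw [← hl]; exact h0
        exact (Sum.inl.inj h2).symm
      have hchainb : ∀ i, 1 ≤ i → i < w.len → M.dir (u i) b := by
        intro i h1' h2'
        have hd := hdirw i h1' h2'
        rw [hfi i h1' (by omega)] at hd
        exact ⟨hd.1, hd.2⟩
      have hchain : ∀ i, 1 ≤ i → i < w.len → M.bidir (u i) (u (i + 1)) := by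
        intro i h1' h2'
        have hd := hbidw i h1' h2'
        rw [hfi i h1' (by omega), hfi (i + 1) (by omega) (by omega)] at hd
        exact ⟨hd.1, hd.2⟩
      have hext : ∀ c0, WalkWit M b c0 (u 1) → WalkWit M b c0 a := by
        intro c0 hw1
        have hstep : ∀ k, 1 ≤ k → k ≤ w.len → WalkWit M b c0 (u k) := by
          intro k hk1
          induction k, hk1 using Nat.le_induction with
          | base => intro _; exact hw1
          | succ n hn ih =>
            intro h2'
            exact walkWit_extend (ih (by omega)) (hchainb n hn (by omega))
              (hchain n hn (by omega))
        rw [← hulen]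
        exact hstep w.len (by omega) le_rfl
      cases hq0 : w.f 0 with
      | inl c =>
        have hc'0 : c' = Sum.inl c := by rw [← hf]; exact hq0
        have hcbne : c ≠ b := fun h => hcb (by rw [hc'0, h])
        have hcadj' : ¬ M.adj c b := by
          intro h
          apply hcadj
          show ((magSoftManip M D).mark c' (Sum.inl b)).isSome = true
          rw [hc'0, manip_mark_inl_inl]
          exact h
        have hm1' : M.mark (u 1) c = some Mark.arrow := by
          have h1' := h1
          rw [hfi 1 (by omega) (by omega), hq0, manip_mark_inl_inl] at h1'
          exact h1'
        have hw1 : WalkWit M b c (u 1) :=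
          ⟨1, le_rfl, fun i => if i = 0 then c else u 1, by simp, by simp,
            by simpa using hm1',
            fun i hA hB => absurd (lt_of_le_of_lt hA hB) (by omega),
            fun i hA hB => absurd (lt_of_le_of_lt hA hB) (by omega)⟩
        exact walkWit_vis M hsym hadjab hcbne hcadj' (hext c hw1)
      | inr d =>
        have hc'0 : c' = Sum.inr d := by rw [← hf]; exact hq0
        rw [hc'0] at hcadj
        have h1' := h1
        rw [hfi 1 (by omega) (by omega), hq0, manip_mark_inl_inr] at h1'
        by_cases hd : d ∈ D ∧ Sum.inl d ∉ (M.sumInl : MixedGraph (N ⊕ N)).inputs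
        case neg => rw [if_neg hd] at h1'; exact absurd h1' (by simp)
        rw [if_pos hd] at h1'
        obtain ⟨hbd, hnund, hvisOr⟩ := hadjInfo d hd hcadj
        by_cases hu1d : u 1 = d
        · have hdirdb : M.dir d b := by rw [← hu1d]; exact hchainb 1 le_rfl (by omega)
          have hvdb := hvisOr hdirdb
          rcases vis_walkWit hvdb with h | ⟨c0, hc0b, hc0adj, hww⟩
          · exact absurd h (by
              intro hcon
              exact hd.2 ((sumInl_inputs_inl M d).2 hcon))
          · refine walkWit_vis M hsym hadjab hc0b hc0adj (hext c0 ?_)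
            rw [hu1d]
            exact hww
        · unfold magSoftTarget at h1'
          rw [if_neg (show ¬ (Sum.inl (u 1) : N ⊕ N) = Sum.inl d by simp [hu1d])] at h1'
          split_ifs at h1' with h2 h3
          · obtain ⟨hout, hdird, hnvis⟩ := h2
            have hddu : M.dir d (u 1) := ⟨hdird.1, hdird.2⟩
            have hnv : ¬ M.VisibleCond d (u 1) := fun hv =>
              hnvis (vis_lift M _ (sumInl_mark_inl M)
                (fun x hx => (sumInl_inputs_inl M x).2 hx) hv)
            obtain ⟨c0, hc0b, hc0adj, hww⟩ :=
              core_witness M hM (hchainb 1 le_rfl (by omega)) hddu hnv hbd hnund hvisOr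
            exact walkWit_vis M hsym hadjab hc0b hc0adj (hext c0 hww)
          · exact absurd h1' (by simp)

end
end

section
/- Let P=(I,V,E) be an iSOPAG and let P_A be its induced subgraph over A⊆V. For any nodes a,b,c∈A: if a*→b is in P_A and the edge between b and c in P_A has a circle at b, then a*→c is in P_A. Furthermore, if a→b is in P_A and the edge between b and c has a circle at b, then the edge between a and c in P_A is a→c or a∘→c; in particular it is not the bidirected edge a↔c. -/
noncomputable section
open Classical

/-- Let `P` be an iSOPAG and `P_A` its induced subgraph over
`A ⊆ V`.  For `a, b, c ∈ A`: if `a *→ b` is in `P_A` and the edge between `b` and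
`c` has a circle at `b`, then `a *→ c` is in `P_A`; furthermore, if `a → b` is in
`P_A` and the edge between `b` and `c` has a circle at `b`, then the edge between
`a` and `c` is `a → c` or `a ∘→ c` — in particular it is not `a ↔ c`. -/
theorem statement15 {N : Type} (P : MixedGraph N) (hP : IsISOPAG P)
    (A : Set N) (hA : A ⊆ P.outputs) (a b c : N)
    (ha : a ∈ A) (hb : b ∈ A) (hc : c ∈ A) :
    ((P.induce A).mark b a = some Mark.arrow →
      (P.induce A).mark b c = some Mark.circle →
      (P.induce A).mark c a = some Mark.arrow) ∧
    ((P.induce A).dir a b → (P.induce A).mark b c = some Mark.circle →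
      ((P.induce A).dir a c ∨ (P.induce A).circArrow a c) ∧
        ¬ (P.induce A).bidir a c) := by
  obtain ⟨hipag, _, _, hR2, _, _, hP3⟩ := hP
  have hwf := hipag.1
  have hm : ∀ x y, x ∈ A → y ∈ A → (P.induce A).mark x y = P.mark x y := by
    intro x y hx hy
    simp [MixedGraph.induce, hx, hy]
  constructor
  · intro h1 h2
    rw [hm b a hb ha] at h1
    rw [hm b c hb hc] at h2
    rw [hm c a hc ha]
    exact hP3 a b c h1 h2
  · intro hd h2
    rw [hm b c hb hc] at h2
    have hd' : P.dir a b := by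
      obtain ⟨h1, h2'⟩ := hd
      rw [hm a b ha hb] at h1
      rw [hm b a hb ha] at h2'
      exact ⟨h1, h2'⟩
    have hca : P.mark c a = some Mark.arrow := hP3 a b c hd'.2 h2
    have hac : P.mark a c ≠ some Mark.arrow := by
      intro h
      have hcon := hR2 c a b (Or.inr ⟨h, hd'⟩) h2
      rw [h2] at hcon
      simp at hcon
    have hsome : (P.mark a c).isSome := by
      exact hwf.2.2.2.1 c a (by rw [hca]; rfl)
    constructor
    · obtain ⟨m, hmval⟩ := Option.isSome_iff_exists.mp hsome
      cases m with
      | tail =>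
        exact Or.inl ⟨by rw [hm a c ha hc]; exact hmval, by rw [hm c a hc ha]; exact hca⟩
      | arrow => exact absurd hmval hac
      | circle =>
        exact Or.inr ⟨by rw [hm a c ha hc]; exact hmval, by rw [hm c a hc ha]; exact hca⟩
    · intro hbid
      obtain ⟨h1, _⟩ := hbid
      rw [hm a c ha hc] at h1
      exact hac h1

end
end

section
/- Let P be an iSOPAG and let a,b be two distinct nodes of P. If there is a potentially directed path from a to b in P, then P contains no edge between a and b with an arrowhead at a (i.e., no edge b*→a). -/
noncomputable section
open Classical

/-- Auxiliary: along any potentially directed path (of length ≥ 1) in an iSOPAG,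
there is no arrowhead at the first node on an edge to the last node. -/
lemma statement16_aux {N : Type} (P : MixedGraph N) (hP : IsISOPAG P) :
    ∀ n : ℕ, ∀ w : GWalk P, w.len = n → 1 ≤ w.len → w.IsPath →
      (∀ i < w.len, P.potDir (w.f i) (w.f (i + 1))) →
      P.mark (w.f 0) (w.f w.len) ≠ some Mark.arrow := by
  have hWF := hP.1.1
  have hsym : ∀ x y : N, (P.mark x y).isSome → (P.mark y x).isSome := hWF.2.2.2.1
  have hnc : ∀ a b : N, P.dir a b → ¬ P.anc b a := hP.1.2.2.2.1
  have hbd : ∀ a b : N, P.anc a b → ¬ P.bidir b a := hP.1.2.2.2.2.1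
  have hR2 : FciR2 P := hP.2.2.2.1
  have hP2 : SopagP2 P := hP.2.2.2.2.2.1
  have hP3 : SopagP3 P := hP.2.2.2.2.2.2
  intro n
  induction n using Nat.strong_induction_on with
  | _ n IH =>
  intro w hlen h1 hpath hpd harr
  subst hlen
  have pd0 := hpd 0 (by omega)
  -- the case of a single edge
  rcases Nat.lt_or_ge w.len 2 with h2 | h2
  · have : w.len = 1 := by omega
    rw [this] at harr
    exact pd0.2.1 harr
  -- now `2 ≤ w.len`
  have hadj01 : (P.mark (w.f 0) (w.f 1)).isSome := pd0.1
  rcases hm : P.mark (w.f 0) (w.f 1) with _ | m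
  · rw [hm] at hadj01; simp at hadj01
  rcases m with _ | _ | _
  · -- tail at `w.f 0`
    rcases hm' : P.mark (w.f 1) (w.f 0) with _ | m'
    · have := hsym _ _ hadj01; rw [hm'] at this; simp at this
    rcases m' with _ | _ | _
    · exact pd0.2.2 hm'
    · -- directed edge `w.f 0 → w.f 1`
      have hdir01 : P.dir (w.f 0) (w.f 1) := ⟨hm, hm'⟩
      by_cases hall : ∀ i < w.len, P.dir (w.f i) (w.f (i + 1))
      · -- the whole path is directed
        have hanc : ∀ k ≤ w.len, P.anc (w.f 0) (w.f k) := by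
          intro k
          induction k with
          | zero => intro _; exact Relation.ReflTransGen.refl
          | succ k ihk =>
            intro hk
            exact Relation.ReflTransGen.tail (ihk (by omega)) (hall k (by omega))
        have hancb : P.anc (w.f 0) (w.f w.len) := hanc w.len le_rfl
        have hadj0n : (P.mark (w.f w.len) (w.f 0)).isSome := by
          apply hsym; rw [harr]; rfl
        rcases hmn : P.mark (w.f w.len) (w.f 0) with _ | mn
        · rw [hmn] at hadj0n; simp at hadj0n
        rcases mn with _ | _ | _
        · exact hnc _ _ ⟨hmn, harr⟩ hancb
        · exact hbd _ _ hancb ⟨hmn, harr⟩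
        · -- circle at `w.f w.len` towards `w.f 0`
          have hdl : P.dir (w.f (w.len - 1)) (w.f w.len) := by
            have := hall (w.len - 1) (by omega)
            rwa [show w.len - 1 + 1 = w.len by omega] at this
          have harr' : P.mark (w.f 0) (w.f (w.len - 1)) = some Mark.arrow :=
            hP3 (w.f (w.len - 1)) (w.f w.len) (w.f 0) hdl.2 hmn
          -- apply IH to the prefix path
          have hwadj : ∀ i < w.len - 1, P.adj (w.f i) (w.f (i + 1)) := by
            intro i hi; exact w.hadj i (by omega)
          refine IH (w.len - 1) (by omega) ⟨w.len - 1, w.f, hwadj⟩ rfl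
            (show 1 ≤ w.len - 1 by omega) ?_ ?_ harr'
          · intro i hi i' hi' hii'
            have h1i : i ≤ w.len - 1 := hi
            have h2i : i' ≤ w.len - 1 := hi'
            exact hpath i (by omega) i' (by omega) hii'
          · intro i hi
            have h1i : i < w.len - 1 := hi
            exact hpd i (by omega)
      · -- let `j` be the first index where the edge is not directed
        push_neg at hall
        have hex : ∃ i, i < w.len ∧ ¬ P.dir (w.f i) (w.f (i + 1)) := hall
        classical
        let j := Nat.find hex
        have hj : j < w.len ∧ ¬ P.dir (w.f j) (w.f (j + 1)) := Nat.find_spec hex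
        have hjmin : ∀ i < j, P.dir (w.f i) (w.f (i + 1)) := by
          intro i hi
          by_contra hcon
          exact absurd ⟨by omega, hcon⟩ (Nat.find_min hex hi)
        have hj1 : 1 ≤ j := by
          by_contra hcon
          have : j = 0 := by omega
          rw [this] at hj
          exact hj.2 hdir01
        have hdirprev : P.dir (w.f (j - 1)) (w.f j) := by
          have := hjmin (j - 1) (by omega)
          rwa [show j - 1 + 1 = j by omega] at this
        have pdj := hpd j hj.1
        rcases hmj : P.mark (w.f j) (w.f (j + 1)) with _ | mj
        · have hthis : (P.mark (w.f j) (w.f (j + 1))).isSome = true := pdj.1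
          rw [hmj] at hthis; simp at hthis
        rcases mj with _ | _ | _
        · -- tail at `w.f j` towards `w.f (j+1)`
          rcases hmj' : P.mark (w.f (j + 1)) (w.f j) with _ | mj'
          · have hthis := hsym _ _ pdj.1
            rw [hmj'] at hthis; simp at hthis
          rcases mj' with _ | _ | _
          · exact pdj.2.2 hmj'
          · exact hj.2 ⟨hmj, hmj'⟩
          · exact (hP2 (w.f (j - 1)) (w.f j) (w.f (j + 1)) hdirprev.2).1 ⟨hmj, hmj'⟩
        · exact pdj.2.1 hmj
        · -- circle at `w.f j` towards `w.f (j+1)`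
          have hskip : P.mark (w.f (j + 1)) (w.f (j - 1)) = some Mark.arrow :=
            hP3 (w.f (j - 1)) (w.f j) (w.f (j + 1)) hdirprev.2 hmj
          by_cases hback : P.mark (w.f (j - 1)) (w.f (j + 1)) = some Mark.arrow
          · have := hR2 (w.f (j + 1)) (w.f (j - 1)) (w.f j)
              (Or.inr ⟨hback, hdirprev⟩) hmj
            rw [hmj] at this; simp at this
          · -- skip `w.f j` to get a shorter pd path
            have hskipadj : (P.mark (w.f (j - 1)) (w.f (j + 1))).isSome := by
              apply hsym; rw [hskip]; rfl
            have hpd3 : ∀ i < w.len - 1,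
                P.potDir ((fun i => if i < j then w.f i else w.f (i + 1)) i)
                  ((fun i => if i < j then w.f i else w.f (i + 1)) (i + 1)) := by
              intro i hi
              simp only
              rcases Nat.lt_trichotomy (i + 1) j with hc | hc | hc
              · rw [if_pos (by omega), if_pos hc]
                exact hpd i (by omega)
              · rw [if_pos (by omega), if_neg (by omega)]
                have h1' : i = j - 1 := by omega
                subst h1'
                rw [show j - 1 + 1 + 1 = j + 1 by omega]
                exact ⟨hskipadj, hback, by rw [hskip]; simp⟩
              · rw [if_neg (by omega), if_neg (by omega)]
                exact hpd (i + 1) (by omega)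
            have hadj3 : ∀ i < w.len - 1,
                P.adj ((fun i => if i < j then w.f i else w.f (i + 1)) i)
                  ((fun i => if i < j then w.f i else w.f (i + 1)) (i + 1)) := by
              intro i hi; exact (hpd3 i hi).1
            have hpath3 : (⟨w.len - 1, fun i => if i < j then w.f i else w.f (i + 1),
                hadj3⟩ : GWalk P).IsPath := by
              intro p hp q hq hpq
              have hp' : p ≤ w.len - 1 := hp
              have hq' : q ≤ w.len - 1 := hq
              simp only at hpq
              split_ifs at hpq with h1' h2' h2'
              · exact hpath p (by omega) q (by omega) hpq
              · have := hpath p (by omega) (q + 1) (by omega) hpq; omega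
              · have := hpath (p + 1) (by omega) q (by omega) hpq; omega
              · have := hpath (p + 1) (by omega) (q + 1) (by omega) hpq; omega
            have harr3 : P.mark
                ((fun i => if i < j then w.f i else w.f (i + 1)) 0)
                ((fun i => if i < j then w.f i else w.f (i + 1)) (w.len - 1)) =
                some Mark.arrow := by
              simp only
              rw [if_pos (by omega), if_neg (by omega),
                show w.len - 1 + 1 = w.len by omega]
              exact harr
            exact IH (w.len - 1) (by omega)
              ⟨w.len - 1, fun i => if i < j then w.f i else w.f (i + 1), hadj3⟩
              rfl (show 1 ≤ w.len - 1 by omega) hpath3 hpd3 harr3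
    · -- `w.f 0 −∘ w.f 1` contradicts P2
      exact (hP2 (w.f w.len) (w.f 0) (w.f 1) harr).1 ⟨hm, hm'⟩
  · exact pd0.2.1 hm
  · -- circle at `w.f 0`: P3 gives an arrowhead at `w.f 1` from `w.f w.len`
    have harr' : P.mark (w.f 1) (w.f w.len) = some Mark.arrow :=
      hP3 (w.f w.len) (w.f 0) (w.f 1) harr hm
    have hadj' : ∀ i < w.len - 1, P.adj (w.f (i + 1)) (w.f (i + 1 + 1)) := by
      intro i hi; exact w.hadj (i + 1) (by omega)
    have := IH (w.len - 1) (by omega)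
      ⟨w.len - 1, fun i => w.f (i + 1), hadj'⟩ rfl (show 1 ≤ w.len - 1 by omega)
      (by intro p hp q hq hpq
          have hp' : p ≤ w.len - 1 := hp
          have hq' : q ≤ w.len - 1 := hq
          have := hpath (p + 1) (by omega) (q + 1) (by omega) hpq; omega)
      (by intro i hi
          have hi' : i < w.len - 1 := hi
          exact hpd (i + 1) (by omega))
    simp only at this
    rw [show w.len - 1 + 1 = w.len by omega] at this
    exact this harr'

/-- Let `P` be an iSOPAG and `a, b` distinct nodes.  If there is a
potentially directed path from `a` to `b` in `P`, then `P` contains no edge between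
`a` and `b` with an arrowhead at `a`. -/
theorem statement16 {N : Type} (P : MixedGraph N) (hP : IsISOPAG P)
    (a b : N) (hab : a ≠ b)
    (hpd : ∃ w : GWalk P, w.IsPath ∧ w.first = a ∧ w.last = b ∧
      ∀ i < w.len, P.potDir (w.f i) (w.f (i + 1))) :
    P.mark a b ≠ some Mark.arrow := by
  obtain ⟨w, hpath, hfirst, hlast, hpd⟩ := hpd
  have hlen : 1 ≤ w.len := by
    by_contra hcon
    have h0 : w.len = 0 := by omega
    apply hab
    rw [← hfirst, ← hlast, GWalk.first, GWalk.last, h0]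
  have := statement16_aux P hP w.len w rfl hlen hpath hpd
  rw [← hfirst, ← hlast]
  exact this


end
end

section
/- Let G=(I,V,E) be an induced subgraph of an iSOPAG P, and let a and b be nodes in the same bucket of G. Then: if c*→a is in G, then c*→b is in G; if c↔a is in G, then c↔b is in G; and if c∘→a or c→a is in G, then c∘→b or c→b is in G. -/
noncomputable section
open Classical

section Statement17Aux

variable {N : Type}

lemma induce_mark_some' {G : MixedGraph N} {A : Set N} {x y : N} {m : Mark}
    (h : (G.induce A).mark x y = some m) :
    x ∈ A ∧ y ∈ A ∧ G.mark x y = some m := by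
  by_cases hc : x ∈ A ∧ y ∈ A
  · exact ⟨hc.1, hc.2, by simpa [MixedGraph.induce, hc] using h⟩
  · simp [MixedGraph.induce, hc] at h

lemma induce_mark_eq' {G : MixedGraph N} {A : Set N} {x y : N}
    (hx : x ∈ A) (hy : y ∈ A) : (G.induce A).mark x y = G.mark x y := by
  simp [MixedGraph.induce, hx, hy]

lemma markSymmSome' {P : MixedGraph N} (hP : IsISOPAG P) {x y : N}
    (h : (P.mark x y).isSome) : (P.mark y x).isSome :=
  hP.1.1.2.2.2.1 x y h

lemma stepArrow' {P : MixedGraph N} (hP : IsISOPAG P) {x y c : N}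
    (hxc : P.mark x c = some Mark.arrow)
    (hxy : (P.mark x y).isSome)
    (hxyn : P.mark x y ≠ some Mark.arrow)
    (hyxn : P.mark y x ≠ some Mark.arrow) :
    P.mark x y = some Mark.circle ∧ P.mark y x = some Mark.circle ∧
      P.mark y c = some Mark.arrow := by
  obtain ⟨m, hm⟩ := Option.isSome_iff_exists.mp hxy
  obtain ⟨m', hm'⟩ := Option.isSome_iff_exists.mp (markSymmSome' hP hxy)
  have hP2 := hP.2.2.2.2.2.1 c x y hxc
  have hP3 := hP.2.2.2.2.2.2
  have hU := hP.1.2.2.2.2.2.1 c x y hxc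
  cases m with
  | arrow => exact absurd hm hxyn
  | tail =>
      cases m' with
      | arrow => exact absurd hm' hyxn
      | tail => exact absurd ⟨hm, hm'⟩ hU
      | circle => exact absurd ⟨hm, hm'⟩ hP2.1
  | circle =>
      cases m' with
      | arrow => exact absurd hm' hyxn
      | tail => exact absurd ⟨hm, hm'⟩ hP2.2
      | circle => exact ⟨hm, hm', hP3 c x y hxc hm⟩

lemma stepBidir' {P : MixedGraph N} (hP : IsISOPAG P) {x y c : N}
    (hcx : P.mark c x = some Mark.arrow)
    (hyx : P.mark y x = some Mark.circle)
    (hyc : P.mark y c = some Mark.arrow) :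
    P.mark c y = some Mark.arrow := by
  have hsom : (P.mark c y).isSome := markSymmSome' hP (by simp [hyc])
  obtain ⟨m, hm⟩ := Option.isSome_iff_exists.mp hsom
  have hP3 := hP.2.2.2.2.2.2
  have hR2 := hP.2.2.2.1
  cases m with
  | arrow => exact hm
  | circle =>
      have := hP3 x c y hcx hm
      rw [hyx] at this
      exact absurd (Option.some_injective _ this) (by simp)
  | tail =>
      have hdir : P.dir c y := ⟨hm, hyc⟩
      have := hR2 x c y (Or.inr ⟨hcx, hdir⟩) hyx
      rw [hyx] at this
      exact absurd (Option.some_injective _ this) (by simp)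

end Statement17Aux

/-- Let `G` be an induced subgraph of an iSOPAG `P` and let `a`
and `b` be nodes in the same bucket of `G`.  Then: if `c *→ a` is in `G`, then
`c *→ b` is in `G`; if `c ↔ a` is in `G`, then `c ↔ b` is in `G`; and if
`c ∘→ a` or `c → a` is in `G`, then `c ∘→ b` or `c → b` is in `G`. -/



theorem statement17 {N : Type} (P : MixedGraph N) (hP : IsISOPAG P)
    (A : Set N) (hA : A ⊆ P.nodes)
    (a b : N) (hbkt : (P.induce A).SameBucket a b) (c : N) :
    ((P.induce A).mark a c = some Mark.arrow →
      (P.induce A).mark b c = some Mark.arrow) ∧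
    ((P.induce A).bidir c a → (P.induce A).bidir c b) ∧
    (((P.induce A).circArrow c a ∨ (P.induce A).dir c a) →
      ((P.induce A).circArrow c b ∨ (P.induce A).dir c b)) := by
  obtain ⟨w, hwpath, hwf, hwl, hnoarr⟩ := hbkt
  have hf0 : w.f 0 = a := hwf
  have hfl : w.f w.len = b := hwl
  have hmemadj : ∀ i < w.len, w.f i ∈ A ∧ w.f (i+1) ∈ A ∧
      (P.mark (w.f i) (w.f (i+1))).isSome := by
    intro i hi
    obtain ⟨m, hm⟩ := Option.isSome_iff_exists.mp (w.hadj i hi)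
    obtain ⟨h1, h2, h3⟩ := induce_mark_some' hm
    exact ⟨h1, h2, by simp [h3]⟩
  have hnoarrP : ∀ i < w.len, P.mark (w.f i) (w.f (i+1)) ≠ some Mark.arrow ∧
      P.mark (w.f (i+1)) (w.f i) ≠ some Mark.arrow := by
    intro i hi
    obtain ⟨h1, h2, _⟩ := hmemadj i hi
    have h := hnoarr i hi
    rwa [induce_mark_eq' h1 h2, induce_mark_eq' h2 h1] at h
  have key : a ∈ A → P.mark a c = some Mark.arrow →
      ∀ i, i ≤ w.len → w.f i ∈ A ∧ P.mark (w.f i) c = some Mark.arrow := by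
    intro ha hac i
    induction i with
    | zero => intro _; rw [hf0]; exact ⟨ha, hac⟩
    | succ n ih =>
      intro hn
      have hlt : n < w.len := hn
      obtain ⟨h1, h2, h3⟩ := hmemadj n hlt
      obtain ⟨hn1, hn2⟩ := hnoarrP n hlt
      obtain ⟨ha1, hac1⟩ := ih (le_of_lt hlt)
      obtain ⟨_, _, harr⟩ := stepArrow' hP hac1 h3 hn1 hn2
      exact ⟨h2, harr⟩
  have key2 : a ∈ A → P.mark a c = some Mark.arrow → P.mark c a = some Mark.arrow →
      ∀ i, i ≤ w.len → P.mark c (w.f i) = some Mark.arrow := by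
    intro ha hac hca i
    induction i with
    | zero => intro _; rw [hf0]; exact hca
    | succ n ih =>
      intro hn
      have hlt : n < w.len := hn
      obtain ⟨h1, h2, h3⟩ := hmemadj n hlt
      obtain ⟨hn1, hn2⟩ := hnoarrP n hlt
      obtain ⟨_, hfn⟩ := key ha hac n (le_of_lt hlt)
      obtain ⟨_, hcirc, harr⟩ := stepArrow' hP hfn h3 hn1 hn2
      exact stepBidir' hP (ih (le_of_lt hlt)) hcirc harr
  have keyrev : P.mark b c = some Mark.arrow → P.mark c b = some Mark.arrow →
      ∀ i, i ≤ w.len → P.mark (w.f (w.len - i)) c = some Mark.arrow ∧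
        P.mark c (w.f (w.len - i)) = some Mark.arrow := by
    intro hbc hcb i
    induction i with
    | zero => intro _; rw [Nat.sub_zero, hfl]; exact ⟨hbc, hcb⟩
    | succ n ih =>
      intro hn
      have hlt : n < w.len := hn
      have hj : w.len - n - 1 + 1 = w.len - n := by omega
      set j := w.len - n - 1 with hjdef
      have hjlt : j < w.len := by omega
      obtain ⟨h1, h2, h3⟩ := hmemadj j hjlt
      obtain ⟨hn1, hn2⟩ := hnoarrP j hjlt
      obtain ⟨ih1, ih2⟩ := ih (le_of_lt hlt)
      rw [← hj] at ih1 ih2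
      have hsym : (P.mark (w.f (j+1)) (w.f j)).isSome := markSymmSome' hP h3
      obtain ⟨_, hcirc, harr⟩ := stepArrow' hP ih1 hsym hn2 hn1
      have hbd := stepBidir' hP ih2 hcirc harr
      have hje : w.len - (n+1) = j := by omega
      rw [hje]
      exact ⟨harr, hbd⟩
  refine ⟨?_, ?_, ?_⟩
  · intro h
    obtain ⟨ha, hc, hac⟩ := induce_mark_some' h
    obtain ⟨hbA, hbc⟩ := key ha hac w.len le_rfl
    rw [hfl] at hbA hbc
    rw [induce_mark_eq' hbA hc]
    exact hbc
  · intro h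
    obtain ⟨hc, ha, hca⟩ := induce_mark_some' h.1
    obtain ⟨_, _, hac⟩ := induce_mark_some' h.2
    obtain ⟨hbA, hbc⟩ := key ha hac w.len le_rfl
    have hcb := key2 ha hac hca w.len le_rfl
    rw [hfl] at hbA hbc hcb
    exact ⟨by rw [induce_mark_eq' hc hbA]; exact hcb,
      by rw [induce_mark_eq' hbA hc]; exact hbc⟩
  · intro h
    have hac' : (P.induce A).mark a c = some Mark.arrow := h.elim (·.2) (·.2)
    obtain ⟨ha, hc, hac⟩ := induce_mark_some' hac'
    have hcaP : P.mark c a ≠ some Mark.arrow := by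
      rcases h with h | h
      · obtain ⟨_, _, h'⟩ := induce_mark_some' h.1
        simp [h']
      · obtain ⟨_, _, h'⟩ := induce_mark_some' h.1
        simp [h']
    obtain ⟨hbA, hbc⟩ := key ha hac w.len le_rfl
    rw [hfl] at hbA hbc
    have hsom : (P.mark c b).isSome := markSymmSome' hP (by simp [hbc])
    obtain ⟨m, hm⟩ := Option.isSome_iff_exists.mp hsom
    cases m with
    | arrow =>
        exfalso
        have := (keyrev hbc hm w.len le_rfl).2
        rw [Nat.sub_self, hf0] at this
        exact hcaP this
    | circle =>
        exact Or.inl ⟨by rw [induce_mark_eq' hc hbA]; exact hm,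
          by rw [induce_mark_eq' hbA hc]; exact hbc⟩
    | tail =>
        exact Or.inr ⟨by rw [induce_mark_eq' hc hbA]; exact hm,
          by rw [induce_mark_eq' hbA hc]; exact hbc⟩

end
end
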